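/- arXiv:math/0601510 — 4 statements merged into one kernel-verified Lean document; each statement's English description precedes it below -/
import Mathlib

section
/- Let $(A,\mathfrak{m})$ be a Noetherian local ring, $I$ an ideal, and $J = (x_1, x_2)$ a minimal reduction of $I$ with $x_1, x_2$ an $A$-regular sequence. Then the complex $0 \to A/\mathfrak{m} \xrightarrow{\alpha_2} (I/\mathfrak{m} I)^2 \xrightarrow{\alpha_1} IJ/\mathfrak{m} IJ \to 0$, where $\alpha_2(\bar a) = (-x_2 a, x_1 a)$ and $\alpha_1(\bar a, \bar b) = x_1 a + x_2 b$, is exact. -/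
/-!
STATEMENT 2: (A,m) Noetherian local, I an ideal, J = (x₁,x₂) a minimal reduction
of I with x₁,x₂ an A-regular sequence.  Then the complex
  0 → A/m --α₂--> (I/mI)² --α₁--> IJ/mIJ → 0,
α₂(ā) = (-x₂a, x₁a),  α₁(ā,b̄) = x₁a + x₂b, is exact.

Exactness is stated element-wise (on representatives), which is literally
ker/image equality for the induced maps on the quotients:
* exactness at `A/m`  : α₂(ā) = 0 → ā = 0;
* exactness at `(I/mI)²`: the image of α₂ equals the kernel of α₁ (both inclusions);
* exactness at `IJ/mIJ`: α₁ is surjective.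
-/

open IsLocalRing Pointwise

def IsReduction {A : Type*} [CommRing A] (J I : Ideal A) : Prop :=
  J ≤ I ∧ ∃ k : ℕ, I ^ (k + 1) = J * I ^ k

def IsMinimalReduction {A : Type*} [CommRing A] (J I : Ideal A) : Prop :=
  IsReduction J I ∧ ∀ J' ≤ J, IsReduction J' I → J' = J

private lemma smul_top_eq_span' {A : Type*} [CommRing A] (x : A) :
    (x • (⊤ : Submodule A A)) = Ideal.span {x} := by
  rw [← Submodule.singleton_set_smul, Submodule.set_smul_top_eq_span]

private lemma mul_span_pair {A : Type*} [CommRing A] (K : Ideal A) (x y : A) :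
    K * Ideal.span {x, y} = Ideal.span {x} * K ⊔ Ideal.span {y} * K := by
  rw [Ideal.span_insert, Ideal.mul_sup, mul_comm K, mul_comm K]

theorem stmt2 {A : Type*} [CommRing A] [IsNoetherianRing A] [IsLocalRing A]
    (I : Ideal A) (x₁ x₂ : A) (hx₁ : x₁ ∈ I) (hx₂ : x₂ ∈ I)
    (hmin : IsMinimalReduction (Ideal.span {x₁, x₂}) I)
    (hreg : RingTheory.Sequence.IsRegular A [x₁, x₂]) :
    (letI m := maximalIdeal A
     letI J := Ideal.span {x₁, x₂}
     -- exactness at A/m (injectivity of α₂):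
     (∀ a : A, x₂ * a ∈ m * I → x₁ * a ∈ m * I → a ∈ m) ∧
     -- image α₂ ⊆ ker α₁ (the maps form a complex):
     (∀ c : A, x₁ * (-(x₂ * c)) + x₂ * (x₁ * c) ∈ m * (I * J)) ∧
     -- ker α₁ ⊆ image α₂ (exactness in the middle):
     (∀ a ∈ I, ∀ b ∈ I, x₁ * a + x₂ * b ∈ m * (I * J) →
        ∃ c : A, a + x₂ * c ∈ m * I ∧ b - x₁ * c ∈ m * I) ∧
     -- exactness at IJ/mIJ (surjectivity of α₁):
     (∀ z ∈ I * J, ∃ a ∈ I, ∃ b ∈ I, z - (x₁ * a + x₂ * b) ∈ m * (I * J))) := by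
  set m := maximalIdeal A with hm
  set J := Ideal.span {x₁, x₂} with hJ
  -- extract regularity facts
  have hw := hreg.toIsWeaklyRegular
  rw [RingTheory.Sequence.isWeaklyRegular_cons_iff] at hw
  obtain ⟨h1, hw2⟩ := hw
  rw [RingTheory.Sequence.isWeaklyRegular_cons_iff] at hw2
  obtain ⟨h2, -⟩ := hw2
  refine ⟨?_, ?_, ?_, ?_⟩
  · -- injectivity of α₂
    intro a ha2 ha1
    by_contra ham
    have hu : IsUnit a := by
      by_contra h'
      exact ham ((IsLocalRing.mem_maximalIdeal a).mpr h')
    obtain ⟨u, hu⟩ := hu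
    have hx1m : x₁ ∈ m * I := by
      have : x₁ = (x₁ * a) * (↑u⁻¹ : Aˣ) := by
        rw [mul_assoc, ← hu, Units.mul_inv, mul_one]
      rw [this]; exact Ideal.mul_mem_right _ _ ha1
    have hx2m : x₂ ∈ m * I := by
      have : x₂ = (x₂ * a) * (↑u⁻¹ : Aˣ) := by
        rw [mul_assoc, ← hu, Units.mul_inv, mul_one]
      rw [this]; exact Ideal.mul_mem_right _ _ ha2
    have hJle : J ≤ m * I := by
      rw [hJ, Ideal.span_le]
      rintro x (rfl | rfl)
      · exact hx1m
      · simp_all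
    obtain ⟨hJI, k, hk⟩ := hmin.1
    have hNak : I ^ (k + 1) = ⊥ := by
      apply Submodule.eq_bot_of_le_smul_of_le_jacobson_bot m (I ^ (k + 1))
        (IsNoetherian.noetherian _) _ (IsLocalRing.maximalIdeal_le_jacobson ⊥)
      rw [Ideal.smul_eq_mul]
      calc I ^ (k + 1) = J * I ^ k := hk
        _ ≤ (m * I) * I ^ k := Ideal.mul_mono_left hJle
        _ = m * I ^ (k + 1) := by rw [mul_assoc, pow_succ, mul_comm I]
    have hx1pow : x₁ ^ (k + 1) = 0 := by
      have := Ideal.pow_mem_pow hx₁ (k + 1)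
      rwa [hNak, Ideal.mem_bot] at this
    have hreg' : IsSMulRegular A (x₁ ^ (k + 1)) := h1.pow (k + 1)
    have : (1 : A) = 0 := by
      apply hreg'
      simp [hx1pow, smul_eq_mul]
    exact one_ne_zero this
  · -- complex property
    intro c
    have : x₁ * (-(x₂ * c)) + x₂ * (x₁ * c) = 0 := by ring
    rw [this]; exact Submodule.zero_mem _
  · -- exactness in the middle
    intro a ha b hb h
    have hdec : m * (I * J) = Ideal.span {x₁} * (m * I) ⊔ Ideal.span {x₂} * (m * I) := by
      rw [show m * (I * J) = (m * I) * J by ring, hJ, mul_span_pair]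
    rw [hdec] at h
    obtain ⟨p, hp, q, hq, hpq⟩ := Submodule.mem_sup.mp h
    obtain ⟨u, hu, rfl⟩ := Ideal.mem_span_singleton_mul.mp hp
    obtain ⟨v, hv, rfl⟩ := Ideal.mem_span_singleton_mul.mp hq
    -- x₁ (a - u) + x₂ (b - v) = 0
    have hrel : x₁ * (a - u) + x₂ * (b - v) = 0 := by
      linear_combination -hpq
    -- use regularity of x₂ mod x₁
    have hmem : x₂ * (b - v) ∈ (x₁ • (⊤ : Submodule A A)) := by
      have : x₂ * (b - v) = x₁ • (-(a - u)) := by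
        rw [smul_eq_mul]; linear_combination hrel
      rw [this]
      exact Submodule.smul_mem_pointwise_smul _ _ _ Submodule.mem_top
    have hq0 : (Submodule.Quotient.mk (b - v) : QuotSMulTop x₁ A) = 0 := by
      apply h2
      show x₂ • (Submodule.Quotient.mk (b - v) : QuotSMulTop x₁ A) =
        x₂ • (0 : QuotSMulTop x₁ A)
      rw [← Submodule.Quotient.mk_smul, smul_zero, smul_eq_mul,
        Submodule.Quotient.mk_eq_zero]
      exact hmem
    rw [Submodule.Quotient.mk_eq_zero, smul_top_eq_span',
      Ideal.mem_span_singleton'] at hq0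
    obtain ⟨c, hc⟩ := hq0
    refine ⟨c, ?_, ?_⟩
    · -- a + x₂ c = u
      have h0 : x₁ • (a - u + x₂ * c) = x₁ • (0 : A) := by
        simp only [smul_eq_mul, mul_zero]
        linear_combination hrel + x₂ * hc
      have h3 := h1 h0
      have : a + x₂ * c = u := by linear_combination h3
      rw [this]; exact hu
    · -- b - x₁ c = v
      have : b - x₁ * c = v := by linear_combination -hc
      rw [this]; exact hv
  · -- surjectivity of α₁
    intro z hz
    have hdec : I * J = Ideal.span {x₁} * I ⊔ Ideal.span {x₂} * I := by
      rw [hJ, mul_span_pair]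
    rw [hdec] at hz
    obtain ⟨p, hp, q, hq, hpq⟩ := Submodule.mem_sup.mp hz
    obtain ⟨a, ha, rfl⟩ := Ideal.mem_span_singleton_mul.mp hp
    obtain ⟨b, hb, rfl⟩ := Ideal.mem_span_singleton_mul.mp hq
    exact ⟨a, ha, b, hb, by rw [← hpq]; simp⟩
end

section
/- Let $(A,\mathfrak{m})$ be a Noetherian local ring, $I$ an ideal, $J = (x_1, x_2, x_3) \subseteq I$ with $x_1, x_2, x_3$ an $A$-regular sequence, and suppose $I^2 \cap J = JI$. Then in the complex $0 \to A/\mathfrak{m} \xrightarrow{\alpha_3} (I/\mathfrak{m} I)^3 \xrightarrow{\alpha_2} (I^2/\mathfrak{m} I^2)^3 \xrightarrow{\alpha_1} I^2 J/\mathfrak{m} I^2 J \to 0$ (built from the Koszul maps on $x_1,x_2,x_3$), one has $\operatorname{image}(\alpha_2) = \ker(\alpha_1)$. -/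
/-!
Since `𝔪 I²J = J · 𝔪 I²`, a relation `x₁ a + x₂ b + x₃ c ∈ 𝔪 I²J` becomes an honest relation
after correcting `(a, b, c)` by elements of `𝔪 I²`. Exactness of the Koszul complex of the regular
sequence `x₁, x₂, x₃` in degree one writes the corrected triple as the Koszul boundary of some
`(p, q, r)`. The condition `I² ∩ J = JI` forces `p, q, r ∈ I`: each corrected entry, e.g.
`x₂ p + x₃ q`, lies in `I² ∩ J = JI`, so it is also `x₁ g₁ + x₂ g₂ + x₃ g₃` with `gᵢ ∈ I`, and
Koszul exactness applied to the difference puts `p - g₂` and `q - g₃` in `J ⊆ I`.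
-/

open IsLocalRing

namespace Ideal

variable {A : Type*} [CommRing A]

lemma mem_span_triple_mul {x₁ x₂ x₃ z : A} {K : Ideal A} :
    z ∈ span {x₁, x₂, x₃} * K ↔ ∃ u ∈ K, ∃ v ∈ K, ∃ w ∈ K, x₁ * u + x₂ * v + x₃ * w = z := by
  simp only [span_insert, sup_mul, Submodule.mem_sup, mem_span_singleton_mul]
  constructor
  · rintro ⟨_, ⟨u, hu, rfl⟩, _, ⟨_, ⟨v, hv, rfl⟩, _, ⟨w, hw, rfl⟩, rfl⟩, rfl⟩
    exact ⟨u, hu, v, hv, w, hw, by ring⟩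
  · rintro ⟨u, hu, v, hv, w, hw, rfl⟩
    exact ⟨_, ⟨u, hu, rfl⟩, _, ⟨_, ⟨v, hv, rfl⟩, _, ⟨w, hw, rfl⟩, rfl⟩, by ring⟩

lemma mul_add_mul_add_mul_mem_span_triple (x₁ x₂ x₃ u v w : A) :
    x₁ * u + x₂ * v + x₃ * w ∈ span {x₁, x₂, x₃} :=
  mul_top (span {x₁, x₂, x₃}) ▸ mem_span_triple_mul.mpr ⟨u, trivial, v, trivial, w, trivial, rfl⟩

end Ideal

namespace RingTheory.Sequence.IsWeaklyRegular

variable {A : Type*} [CommRing A]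

lemma mem_ofList_take_of_mul_mem {rs : List A} (h : IsWeaklyRegular A rs) {i : ℕ}
    (hi : i < rs.length) {t : A} (ht : rs[i] * t ∈ Ideal.ofList (rs.take i)) :
    t ∈ Ideal.ofList (rs.take i) := by
  have := h.regular_mod_prev i hi
  rw [smul_eq_mul, Ideal.mul_top] at this
  exact mem_of_isSMulRegular_quotient_of_smul_mem this ht

theorem exists_koszul_boundary_of_relation {x₁ x₂ x₃ u v w : A} (hreg : IsWeaklyRegular A [x₁, x₂, x₃])
    (hrel : x₁ * u + x₂ * v + x₃ * w = 0) :
    ∃ p q r : A, u = x₂ * p + x₃ * q ∧ v = -(x₁ * p) + x₃ * r ∧ w = -(x₁ * q) - x₂ * r := by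
  have reg₁ := fun t : A => hreg.mem_ofList_take_of_mul_mem (i := 0) (by simp) (t := t)
  have reg₂ := fun t : A => hreg.mem_ofList_take_of_mul_mem (i := 1) (by simp) (t := t)
  have reg₃ := fun t : A => hreg.mem_ofList_take_of_mul_mem (i := 2) (by simp) (t := t)
  simp only [List.take, List.getElem_cons_zero, List.getElem_cons_succ, Ideal.ofList_nil,
    Ideal.ofList_cons, Ideal.mem_bot, sup_bot_eq, ← Ideal.span_insert] at reg₁ reg₂ reg₃
  obtain ⟨s, n, hw⟩ := Ideal.mem_span_pair.mp <|
    reg₃ w (Ideal.mem_span_pair.mpr ⟨-u, -v, by linear_combination -hrel⟩)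
  obtain ⟨k, hv⟩ := Ideal.mem_span_singleton'.mp <|
    reg₂ (v + x₃ * n) (Ideal.mem_span_singleton'.mpr
      ⟨-(u + x₃ * s), by linear_combination -hrel - x₃ * hw⟩)
  have hu : u + x₃ * s + x₂ * k = 0 :=
    reg₁ _ (by linear_combination hrel + x₃ * hw + x₂ * hv)
  exact ⟨-k, -s, -n, by linear_combination hu, by linear_combination -hv,
    by linear_combination -hw⟩

theorem mem_of_relation_mem_span_triple_mul {x₁ x₂ x₃ u v w : A} {K : Ideal A}
    (hreg : IsWeaklyRegular A [x₁, x₂, x₃]) (hJK : Ideal.span {x₁, x₂, x₃} ≤ K)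
    (h : x₁ * u + x₂ * v + x₃ * w ∈ Ideal.span {x₁, x₂, x₃} * K) :
    u ∈ K ∧ v ∈ K ∧ w ∈ K := by
  obtain ⟨g₁, hg₁, g₂, hg₂, g₃, hg₃, hg⟩ := Ideal.mem_span_triple_mul.mp h
  obtain ⟨p, q, r, hu, hv, hw⟩ := hreg.exists_koszul_boundary_of_relation
    (u := u - g₁) (v := v - g₂) (w := w - g₃) (by linear_combination -hg)
  have mem : ∀ a b c : A, x₁ * a + x₂ * b + x₃ * c ∈ K := fun a b c =>
    hJK (Ideal.mul_add_mul_add_mul_mem_span_triple x₁ x₂ x₃ a b c)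
  refine ⟨?_, ?_, ?_⟩
  · convert K.add_mem hg₁ (mem 0 p q) using 1; linear_combination hu
  · convert K.add_mem hg₂ (mem (-p) 0 r) using 1; linear_combination hv
  · convert K.add_mem hg₃ (mem (-q) (-r) 0) using 1; linear_combination hw

end RingTheory.Sequence.IsWeaklyRegular

theorem stmt3_general {A : Type*} [CommRing A] [IsLocalRing A]
    (I : Ideal A) (x₁ x₂ x₃ : A) (hx₁ : x₁ ∈ I) (hx₂ : x₂ ∈ I) (hx₃ : x₃ ∈ I)
    (hreg : RingTheory.Sequence.IsRegular A [x₁, x₂, x₃])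
    (hVV : I ^ 2 ⊓ Ideal.span {x₁, x₂, x₃} = Ideal.span {x₁, x₂, x₃} * I) :
    (letI m := maximalIdeal A
     letI J := Ideal.span {x₁, x₂, x₃}
     -- image α₂ ⊆ ker α₁ :
     (∀ f g h : A, f ∈ I → g ∈ I → h ∈ I →
        x₁ * (-(x₂ * f) - x₃ * g) + x₂ * (x₁ * f - x₃ * h) + x₃ * (x₁ * g + x₂ * h)
          ∈ m * (I ^ 2 * J)) ∧
     -- ker α₁ ⊆ image α₂ :
     (∀ a ∈ I ^ 2, ∀ b ∈ I ^ 2, ∀ c ∈ I ^ 2,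
        x₁ * a + x₂ * b + x₃ * c ∈ m * (I ^ 2 * J) →
        ∃ f g h : A, f ∈ I ∧ g ∈ I ∧ h ∈ I ∧
          a - (-(x₂ * f) - x₃ * g) ∈ m * I ^ 2 ∧
          b - (x₁ * f - x₃ * h) ∈ m * I ^ 2 ∧
          c - (x₁ * g + x₂ * h) ∈ m * I ^ 2)) := by
  refine ⟨fun f g h _ _ _ => by ring_nf; exact zero_mem _, fun a ha b hb c hc hs => ?_⟩
  set J := Ideal.span {x₁, x₂, x₃}
  have hJI : J ≤ I := Ideal.span_le.mpr (by simp [Set.insert_subset_iff, hx₁, hx₂, hx₃])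
  have hmI : maximalIdeal A * I ^ 2 ≤ I ^ 2 := Ideal.mul_le_right
  rw [show maximalIdeal A * (I ^ 2 * J) = J * (maximalIdeal A * I ^ 2) by ring,
    Ideal.mem_span_triple_mul] at hs
  obtain ⟨a', ha', b', hb', c', hc', hs⟩ := hs
  obtain ⟨p, q, r, hp, hq, hr⟩ := hreg.toIsWeaklyRegular.exists_koszul_boundary_of_relation
    (u := a - a') (v := b - b') (w := c - c') (by linear_combination -hs)
  have mem_JI : ∀ u v w, x₁ * u + x₂ * v + x₃ * w ∈ I ^ 2 →
      x₁ * u + x₂ * v + x₃ * w ∈ J * I := fun u v w hy =>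
    hVV ▸ ⟨hy, Ideal.mul_add_mul_add_mul_mem_span_triple x₁ x₂ x₃ u v w⟩
  obtain ⟨-, hpI, hqI⟩ := hreg.toIsWeaklyRegular.mem_of_relation_mem_span_triple_mul hJI <|
    mem_JI 0 p q (by convert sub_mem ha (hmI ha') using 1; rw [hp]; ring)
  obtain ⟨-, hrI, -⟩ := hreg.toIsWeaklyRegular.mem_of_relation_mem_span_triple_mul hJI <|
    mem_JI (-q) (-r) 0 (by convert sub_mem hc (hmI hc') using 1; rw [hr]; ring)
  refine ⟨-p, -q, -r, neg_mem hpI, neg_mem hqI, hrI, ?_, ?_, ?_⟩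
  · convert ha' using 1; linear_combination hp
  · convert hb' using 1; linear_combination hq
  · convert hc' using 1; linear_combination hr

theorem stmt3 {A : Type*} [CommRing A] [IsNoetherianRing A] [IsLocalRing A]
    (I : Ideal A) (x₁ x₂ x₃ : A) (hx₁ : x₁ ∈ I) (hx₂ : x₂ ∈ I) (hx₃ : x₃ ∈ I)
    (hreg : RingTheory.Sequence.IsRegular A [x₁, x₂, x₃])
    (hVV : I ^ 2 ⊓ Ideal.span {x₁, x₂, x₃} = Ideal.span {x₁, x₂, x₃} * I) :
    (letI m := maximalIdeal A
     letI J := Ideal.span {x₁, x₂, x₃}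
     -- image α₂ ⊆ ker α₁ :
     (∀ f g h : A, f ∈ I → g ∈ I → h ∈ I →
        x₁ * (-(x₂ * f) - x₃ * g) + x₂ * (x₁ * f - x₃ * h) + x₃ * (x₁ * g + x₂ * h)
          ∈ m * (I ^ 2 * J)) ∧
     -- ker α₁ ⊆ image α₂ :
     (∀ a ∈ I ^ 2, ∀ b ∈ I ^ 2, ∀ c ∈ I ^ 2,
        x₁ * a + x₂ * b + x₃ * c ∈ m * (I ^ 2 * J) →
        ∃ f g h : A, f ∈ I ∧ g ∈ I ∧ h ∈ I ∧
          a - (-(x₂ * f) - x₃ * g) ∈ m * I ^ 2 ∧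
          b - (x₁ * f - x₃ * h) ∈ m * I ^ 2 ∧
          c - (x₁ * g + x₂ * h) ∈ m * I ^ 2)) :=
  stmt3_general I x₁ x₂ x₃ hx₁ hx₂ hx₃ hreg hVV
end

section
/- Let $(A,\mathfrak{m})$ be a Noetherian local ring with infinite residue field and $I$ an ideal with $l(I) > 0$. Then $\operatorname{depth} F(I^n) > 0$ for all $n \gg 0$, i.e., there exists $n_0$ such that $H^0_{F(I^n)_+}(F(I^n)) = 0$ for all $n \geq n_0$. -/
/-!
The degree-`d` pieces of `H⁰_{F(I)₊}(F(I))`, lifted to `I ^ d`, form an ideal of the Rees algebra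
`A[It]`, which is Noetherian. Its finitely many generators have degree at most some `D` and are all
killed by one power `I ^ K`, so each of its elements of degree `m ≥ D + K` lies in `𝔪 I ^ m`:
the local cohomology vanishes in large degrees. As `F(Iⁿ)` is the `n`-th Veronese ring of `F(I)`,
this handles every degree `j ≥ 1` of `F(Iⁿ)` once `n ≥ D`. In degree `0`, a unit `a` with
`a I ^ k ⊆ 𝔪 I ^ k` would give `I ^ k = 𝔪 I ^ k`, which `l(I) > 0` excludes.
-/

open Polynomial Filter IsLocalRing

namespace Ideal

variable {A : Type*} [CommRing A]

theorem colon_le_colon_mul (N P I : Ideal A) : N.colon ↑P ≤ (N * I).colon ↑(P * I) := by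
  intro r hr
  rw [Submodule.mem_colon] at hr ⊢
  intro b hb
  refine Submodule.mul_induction_on hb (fun x hx y hy => ?_) fun x y hx hy => ?_
  · rw [smul_eq_mul, ← mul_assoc]
    exact mul_mem_mul (hr x hx) hy
  · rw [smul_add]
    exact add_mem hx hy

theorem monotone_colon_pow (I J : Ideal A) (d : ℕ) :
    Monotone fun K => (J * I ^ (d + K)).colon ↑(I ^ K) :=
  monotone_nat_of_le_succ fun K => by
    simpa only [← add_assoc, pow_succ, mul_assoc] using
      colon_le_colon_mul (J * I ^ (d + K)) (I ^ K) I

/-- For `J = 𝔪` this is the preimage in `I ^ d` of the degree-`d` part of `H⁰_{F(I)₊}(F(I))`. -/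
def irrelevantTorsion (I J : Ideal A) (d : ℕ) : Ideal A :=
  I ^ d ⊓ ⨆ K, (J * I ^ (d + K)).colon ↑(I ^ K)

variable {I J : Ideal A} {d : ℕ} {a : A}

theorem mem_irrelevantTorsion :
    a ∈ irrelevantTorsion I J d ↔ a ∈ I ^ d ∧ ∃ K, a ∈ (J * I ^ (d + K)).colon ↑(I ^ K) := by
  rw [irrelevantTorsion, mem_inf,
    Submodule.mem_iSup_of_directed _ (monotone_colon_pow I J d).directed_le]

theorem eventually_mem_colon_of_mem_irrelevantTorsion (ha : a ∈ irrelevantTorsion I J d) :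
    ∀ᶠ K in atTop, a ∈ (J * I ^ (d + K)).colon ↑(I ^ K) := by
  obtain ⟨-, K, hK⟩ := mem_irrelevantTorsion.mp ha
  exact eventually_atTop.mpr ⟨K, fun K' hK' => monotone_colon_pow I J d hK' hK⟩

theorem mul_mem_irrelevantTorsion {e : ℕ} {c : A} (hc : c ∈ I ^ e)
    (ha : a ∈ irrelevantTorsion I J d) : c * a ∈ irrelevantTorsion I J (e + d) := by
  obtain ⟨had, K, hK⟩ := mem_irrelevantTorsion.mp ha
  refine mem_irrelevantTorsion.mpr ⟨pow_add I e d ▸ mul_mem_mul hc had, K, ?_⟩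
  rw [Submodule.mem_colon] at hK ⊢
  intro b hb
  rw [smul_eq_mul, mul_assoc, add_assoc, pow_add, mul_left_comm]
  exact mul_mem_mul hc (hK b hb)

variable (I J) in
def irrelevantTorsionRees : Ideal (reesAlgebra I) where
  carrier := {f | ∀ d, (f : A[X]).coeff d ∈ irrelevantTorsion I J d}
  zero_mem' d := by simp
  add_mem' hf hg d := by simpa using add_mem (hf d) (hg d)
  smul_mem' r f hf d := by
    rw [smul_eq_mul, MulMemClass.coe_mul, coeff_mul]
    refine Submodule.sum_mem _ fun ⟨x, y⟩ hxy => ?_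
    rw [← Finset.HasAntidiagonal.mem_antidiagonal.mp hxy]
    exact mul_mem_irrelevantTorsion (r.2 x) (hf y)

theorem mul_mem_of_mem_colon_pow {x y K : ℕ} {c w : A} (hc : c ∈ I ^ x)
    (hw : w ∈ (J * I ^ (y + K)).colon ↑(I ^ K)) (hKx : K ≤ x) : c * w ∈ J * I ^ (x + y) := by
  have hw' := colon_le_colon_mul _ _ (I ^ (x - K)) hw
  rw [← pow_add, mul_assoc, ← pow_add, Nat.add_sub_cancel' hKx,
    show y + K + (x - K) = x + y by omega] at hw'
  simpa only [smul_eq_mul, mul_comm w] using Submodule.mem_colon.mp hw' c hc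

theorem coeff_mul_mem_of_natDegree_le (r : reesAlgebra I) {f : A[X]} {D K m : ℕ}
    (hdeg : f.natDegree ≤ D) (hf : ∀ y, f.coeff y ∈ (J * I ^ (y + K)).colon ↑(I ^ K))
    (hm : D + K ≤ m) : ((r : A[X]) * f).coeff m ∈ J * I ^ m := by
  rw [coeff_mul]
  refine Submodule.sum_mem _ fun ⟨x, y⟩ hxy => ?_
  have hxy : x + y = m := Finset.HasAntidiagonal.mem_antidiagonal.mp hxy
  rcases le_or_gt y D with hyD | hDy
  · exact hxy ▸ mul_mem_of_mem_colon_pow (r.2 x) (hf y) (by omega)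
  · rw [coeff_eq_zero_of_natDegree_lt (hdeg.trans_lt hDy), mul_zero]
    exact zero_mem _

theorem eventually_coeff_mem_colon {f : reesAlgebra I} (hf : f ∈ irrelevantTorsionRees I J) :
    ∀ᶠ K in atTop, ∀ y, (f : A[X]).coeff y ∈ (J * I ^ (y + K)).colon ↑(I ^ K) := by
  have hsupp := (eventually_all_finset (f : A[X]).support).mpr fun y _ =>
    eventually_mem_colon_of_mem_irrelevantTorsion (hf y)
  filter_upwards [hsupp] with K hK y
  by_cases hy : y ∈ (f : A[X]).support
  · exact hK y hy
  · rw [notMem_support_iff.mp hy]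
    exact zero_mem _

variable (I J) in
theorem eventually_irrelevantTorsion_le [IsNoetherianRing A] :
    ∀ᶠ m in atTop, irrelevantTorsion I J m ≤ J * I ^ m := by
  classical
  obtain ⟨s, hs⟩ := IsNoetherian.noetherian (irrelevantTorsionRees I J)
  obtain ⟨K, hK⟩ := ((eventually_all_finset s).mpr fun f hf =>
    eventually_coeff_mem_colon (hs ▸ Submodule.subset_span hf)).exists
  set D := s.sup fun f : reesAlgebra I => (f : A[X]).natDegree
  refine eventually_atTop.mpr ⟨D + K, fun m hm a ha => ?_⟩
  have hmon : (⟨monomial m a, reesAlgebra.monomial_mem.mpr (mem_irrelevantTorsion.mp ha).1⟩ :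
      reesAlgebra I) ∈ Submodule.span (reesAlgebra I) s := by
    rw [hs]
    intro d
    rw [coeff_monomial]
    split_ifs with hmd
    · exact hmd ▸ ha
    · exact zero_mem _
  obtain ⟨g, -, hg⟩ := Submodule.mem_span_finset.mp hmon
  have ha_sum : ∑ f ∈ s, ((g f : A[X]) * f).coeff m = a := by
    simpa using congr(($hg : A[X]).coeff m)
  rw [← ha_sum]
  exact Submodule.sum_mem _ fun f hf => coeff_mul_mem_of_natDegree_le (g f)
    (Finset.le_sup (f := fun f : reesAlgebra I => (f : A[X]).natDegree) hf) (hK f hf) hm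

end Ideal

theorem IsLocalRing.mem_maximalIdeal_of_forall_mul_mem {A : Type*} [CommRing A] [IsLocalRing A]
    {N : Ideal A} (hN : N ≠ maximalIdeal A * N) {a : A}
    (ha : ∀ b ∈ N, a * b ∈ maximalIdeal A * N) : a ∈ maximalIdeal A := by
  by_contra hmax
  obtain ⟨u, rfl⟩ := notMem_maximalIdeal.mp hmax
  refine hN (le_antisymm (fun b hb => ?_) Ideal.mul_le_right)
  simpa using Ideal.mul_mem_left _ ↑u⁻¹ (ha b hb)

theorem stmt5_general {A : Type*} [CommRing A] [IsNoetherianRing A] [IsLocalRing A]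
    (I : Ideal A)
    -- `l(I) > 0` :
    (hl : ∀ n : ℕ, I ^ n ≠ maximalIdeal A * I ^ n) :
    ∃ n₀ : ℕ, ∀ n ≥ n₀, ∀ j : ℕ, ∀ a ∈ I ^ (n * j),
      (∃ k : ℕ, ∀ b ∈ I ^ (n * k), a * b ∈ maximalIdeal A * I ^ (n * (j + k))) →
      a ∈ maximalIdeal A * I ^ (n * j) := by
  obtain ⟨D, hD⟩ := eventually_atTop.mp (Ideal.eventually_irrelevantTorsion_le I (maximalIdeal A))
  refine ⟨D + 1, fun n hn j a ha ⟨k, hk⟩ => ?_⟩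
  rcases j.eq_zero_or_pos with rfl | hj
  · simp only [mul_zero, zero_add, pow_zero, mul_one] at hk ⊢
    exact mem_maximalIdeal_of_forall_mul_mem (hl (n * k)) hk
  · refine hD (n * j) (le_trans (by omega) (Nat.le_mul_of_pos_right n hj))
      (Ideal.mem_irrelevantTorsion.mpr ⟨ha, n * k, Submodule.mem_colon.mpr fun b hb => ?_⟩)
    simpa only [smul_eq_mul, mul_add] using hk b hb

theorem stmt5 {A : Type*} [CommRing A] [IsNoetherianRing A] [IsLocalRing A]
    [Infinite (ResidueField A)] (I : Ideal A)
    -- `l(I) > 0` :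
    (hl : ∀ n : ℕ, I ^ n ≠ maximalIdeal A * I ^ n) :
    ∃ n₀ : ℕ, ∀ n ≥ n₀, ∀ j : ℕ, ∀ a ∈ I ^ (n * j),
      (∃ k : ℕ, ∀ b ∈ I ^ (n * k), a * b ∈ maximalIdeal A * I ^ (n * (j + k))) →
      a ∈ maximalIdeal A * I ^ (n * j) :=
  stmt5_general I hl
end

section
/- Let $A = k[[X,Y,U,V]]/(XY, Y^3)$ with images $x,y,u,v$, let $\mathfrak{m} = (x,y,u,v)$ and $J = (x^n, u^n, v^n)$ for a fixed $n \geq 1$. Then $\mathfrak{m}^{2n} \cap (x^n, u^n, v^n) = \mathfrak{m}^n (x^n, u^n, v^n)$ for all $n \geq 1$. -/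
/-!
All ideals involved are monomial ideals of `k[[X,Y,U,V]]`, so membership is decided by supports:
a series lies in `𝔪ᵈ` iff its support lies in total degree `≥ d`, and in the ideal generated by
finitely many monomials iff its support lies in their upper closure. Pulled back along
`k[[X,Y,U,V]] → A`, an element of `𝔪^{2n} ∩ J` has support in
`(upperClosure {Xⁿ, Uⁿ, Vⁿ} ∩ {deg ≥ 2n}) ∪ upperClosure {XY, Y³}`. Splitting the series along
this union, the first part is a sum of multiples of `Xⁿ, Uⁿ, Vⁿ` by series of order `≥ n`,
hence lies in `𝔪ⁿ J`, and the second part lies in `(XY, Y³)`.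
-/

noncomputable section

/-- The variables of `k[[X,Y,U,V]]`. -/
def Xv (k : Type*) [Field k] (i : Fin 4) : MvPowerSeries (Fin 4) k :=
  MvPowerSeries.X i

/-- The relation ideal `(XY, Y³)` of `k[[X,Y,U,V]]`. -/
def relIdeal (k : Type*) [Field k] : Ideal (MvPowerSeries (Fin 4) k) :=
  Ideal.span {Xv k 0 * Xv k 1, Xv k 1 ^ 3}

/-- `A = k[[X,Y,U,V]]/(XY, Y³)`. -/
abbrev Ak (k : Type*) [Field k] := MvPowerSeries (Fin 4) k ⧸ relIdeal k

theorem Ideal.map_inf_map_le_map_of_surjective {A B : Type*} [CommRing A] [CommRing B]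
    {φ : A →+* B} (hφ : Function.Surjective φ) {I J K : Ideal A}
    (h : (I ⊔ RingHom.ker φ) ⊓ (J ⊔ RingHom.ker φ) ≤ K ⊔ RingHom.ker φ) :
    I.map φ ⊓ J.map φ ≤ K.map φ := by
  intro x hx
  obtain ⟨y, rfl⟩ := hφ x
  rw [← Ideal.mem_comap, Ideal.comap_inf, Ideal.comap_map_of_surjective' φ hφ,
    Ideal.comap_map_of_surjective' φ hφ] at hx
  rw [← Ideal.mem_comap, Ideal.comap_map_of_surjective' φ hφ]
  exact h hx

namespace MvPowerSeries

open Finsupp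
open scoped Pointwise

section

variable {σ R : Type*} [CommSemiring R]

def support (f : MvPowerSeries σ R) : Set (σ →₀ ℕ) := {d | coeff d f ≠ 0}

@[simp]
theorem mem_support {f : MvPowerSeries σ R} {d : σ →₀ ℕ} : d ∈ f.support ↔ coeff d f ≠ 0 :=
  Iff.rfl

theorem support_add_subset (f g : MvPowerSeries σ R) :
    (f + g).support ⊆ f.support ∪ g.support := by
  intro d hd
  by_contra h
  simp_all

theorem support_mul_subset (f g : MvPowerSeries σ R) :
    (f * g).support ⊆ f.support + g.support := by
  classical
  intro d hd
  rw [mem_support, coeff_mul] at hd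
  obtain ⟨⟨a, b⟩, hab, hne⟩ := Finset.exists_ne_zero_of_sum_ne_zero hd
  exact ⟨a, left_ne_zero_of_mul hne, b, right_ne_zero_of_mul hne,
    Finset.HasAntidiagonal.mem_antidiagonal.mp hab⟩

theorem support_monomial_subset (e : σ →₀ ℕ) (r : R) : (monomial e r).support ⊆ {e} := by
  classical
  intro d hd
  rw [mem_support, coeff_monomial] at hd
  exact (ite_ne_right_iff.mp hd).1

def restrictSupportIdeal (s : Set (σ →₀ ℕ)) (hs : IsUpperSet s) :
    Ideal (MvPowerSeries σ R) where
  carrier := {f | f.support ⊆ s}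
  zero_mem' := by simp [Set.subset_def]
  add_mem' hf hg := (support_add_subset _ _).trans (Set.union_subset hf hg)
  smul_mem' c f hf := by
    rintro d hd
    obtain ⟨a, -, b, hb, rfl⟩ := support_mul_subset c f hd
    exact hs le_add_self (hf hb)

theorem span_monomial_le_restrictSupportIdeal (E : Set (σ →₀ ℕ)) :
    Ideal.span ((monomial · (1 : R)) '' E) ≤
      restrictSupportIdeal (upperClosure E) (upperClosure E).upper := by
  rw [Ideal.span_le]
  rintro _ ⟨e, he, rfl⟩
  exact (support_monomial_subset e 1).trans (Set.singleton_subset_iff.mpr (subset_upperClosure he))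

theorem isUpperSet_le_degree (m : ℕ) : IsUpperSet {d : σ →₀ ℕ | m ≤ degree d} :=
  fun _ _ hle h => h.trans (degree_mono hle)

theorem span_X_le_restrictSupportIdeal :
    Ideal.span (Set.range X) ≤
      restrictSupportIdeal (R := R) {d : σ →₀ ℕ | 1 ≤ degree d} (isUpperSet_le_degree 1) := by
  rw [Ideal.span_le]
  rintro _ ⟨i, rfl⟩ d hd
  rw [X_def] at hd
  simp [Set.eq_of_mem_singleton (support_monomial_subset _ _ hd)]

theorem pow_span_X_le_restrictSupportIdeal (m : ℕ) :
    Ideal.span (Set.range X) ^ m ≤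
      restrictSupportIdeal (R := R) {d : σ →₀ ℕ | m ≤ degree d} (isUpperSet_le_degree m) := by
  induction m with
  | zero => intro f _ d _; simp
  | succ m ih =>
    rw [pow_succ, Ideal.mul_le]
    intro f hf g hg d hd
    obtain ⟨a, ha, b, hb, rfl⟩ := support_mul_subset f g hd
    show m + 1 ≤ degree (a + b)
    rw [map_add]
    exact add_le_add (ih hf ha) (span_X_le_restrictSupportIdeal hg hb)

theorem exists_eq_monomial_mul_of_support_subset {f : MvPowerSeries σ R} {e : σ →₀ ℕ}
    (hf : f.support ⊆ Set.Ici e) :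
    ∃ g : MvPowerSeries σ R, f = monomial e 1 * g ∧ ∀ d, coeff d g = coeff (d + e) f := by
  classical
  let g : MvPowerSeries σ R := fun d => coeff (d + e) f
  refine ⟨g, ?_, fun d => rfl⟩
  ext d
  rw [coeff_monomial_mul, one_mul]
  split_ifs with hle
  · exact congrArg (coeff · f) (tsub_add_cancel_of_le hle).symm
  · by_contra hd
    exact hle (hf hd)

open Classical in
def filter (s : Set (σ →₀ ℕ)) (f : MvPowerSeries σ R) : MvPowerSeries σ R :=
  fun d => if d ∈ s then coeff d f else 0

open Classical in
theorem coeff_filter (s : Set (σ →₀ ℕ)) (f : MvPowerSeries σ R) (d : σ →₀ ℕ) :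
    coeff d (filter s f) = if d ∈ s then coeff d f else 0 :=
  rfl

theorem support_filter_subset (s : Set (σ →₀ ℕ)) (f : MvPowerSeries σ R) :
    (filter s f).support ⊆ s ∩ f.support := by
  classical
  intro d hd
  rw [mem_support, coeff_filter] at hd
  exact ite_ne_right_iff.mp hd

theorem filter_add_filter_compl (s : Set (σ →₀ ℕ)) (f : MvPowerSeries σ R) :
    filter s f + filter sᶜ f = f := by
  ext d
  rw [map_add, coeff_filter, coeff_filter]
  by_cases hd : d ∈ s <;> simp [hd]

theorem mem_of_support_subset_union {S : Type*} [SetLike S (MvPowerSeries σ R)]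
    [AddSubmonoidClass S (MvPowerSeries σ R)] {I : S} {s t : Set (σ →₀ ℕ)}
    (hs : ∀ g : MvPowerSeries σ R, g.support ⊆ s → g ∈ I)
    (ht : ∀ g : MvPowerSeries σ R, g.support ⊆ t → g ∈ I)
    {f : MvPowerSeries σ R} (hf : f.support ⊆ s ∪ t) : f ∈ I := by
  rw [← filter_add_filter_compl s f]
  refine add_mem (hs _ ((support_filter_subset s f).trans Set.inter_subset_left)) (ht _ ?_)
  intro d hd
  obtain ⟨hds, hdf⟩ := support_filter_subset sᶜ f hd
  exact (hf hdf).resolve_left hds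

theorem mem_of_support_subset_biUnion {S : Type*} [SetLike S (MvPowerSeries σ R)]
    [AddSubmonoidClass S (MvPowerSeries σ R)] {I : S} {ι : Type*} {t : Set ι} (ht : t.Finite)
    {u : ι → Set (σ →₀ ℕ)} (hu : ∀ i ∈ t, ∀ g : MvPowerSeries σ R, g.support ⊆ u i → g ∈ I)
    {f : MvPowerSeries σ R} (hf : f.support ⊆ ⋃ i ∈ t, u i) : f ∈ I := by
  induction t, ht using Set.Finite.induction_on generalizing f with
  | empty =>
    convert zero_mem I
    ext d
    by_contra hd
    simpa using hf hd
  | @insert a t _ _ ih =>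
    rw [Set.biUnion_insert] at hf
    exact mem_of_support_subset_union (hu a (Set.mem_insert a t))
      (fun g hg => ih (fun i hi => hu i (Set.mem_insert_of_mem a hi)) hg) hf

theorem mem_span_monomial_mul_of_support_subset {I : Ideal (MvPowerSeries σ R)}
    {f : MvPowerSeries σ R} {e : σ →₀ ℕ} (hf : f.support ⊆ Set.Ici e)
    (hI : ∀ g : MvPowerSeries σ R, g.support ⊆ (· + e) ⁻¹' f.support → g ∈ I) :
    f ∈ Ideal.span {monomial e 1} * I := by
  obtain ⟨g, rfl, hg⟩ := exists_eq_monomial_mul_of_support_subset hf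
  exact Ideal.mul_mem_mul (Ideal.mem_span_singleton_self _)
    (hI g fun d hd => by rwa [Set.mem_preimage, mem_support, ← hg])

theorem mem_pow_span_X_of_support_subset [Finite σ] {m : ℕ} {f : MvPowerSeries σ R}
    (hf : f.support ⊆ {d | m ≤ degree d}) : f ∈ Ideal.span (Set.range X) ^ m := by
  induction m generalizing f with
  | zero => simp
  | succ m ih =>
    have hcover : {d : σ →₀ ℕ | m + 1 ≤ degree d} ⊆
        ⋃ i ∈ Set.univ, Set.Ici (single i 1) ∩ {d | m + 1 ≤ degree d} := by
      intro d hd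
      obtain ⟨i, hi⟩ : ∃ i, d i ≠ 0 := by
        by_contra! h
        simp [show d = 0 from Finsupp.ext h] at hd
      exact Set.mem_biUnion (Set.mem_univ i)
        ⟨single_le_iff.mpr (Nat.one_le_iff_ne_zero.mpr hi), hd⟩
    refine mem_of_support_subset_biUnion Set.finite_univ (fun i _ g hg => ?_) (hf.trans hcover)
    rw [pow_succ']
    refine Ideal.mul_mono_left ((Ideal.span_singleton_le_iff_mem _).mpr ?_)
      (mem_span_monomial_mul_of_support_subset (hg.trans Set.inter_subset_left) fun h hh => ih ?_)
    · exact X_def (R := R) i ▸ Ideal.subset_span (Set.mem_range_self i)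
    · intro d hd
      have hdeg : m + 1 ≤ degree (d + single i 1) := (hg (hh hd)).2
      rw [map_add, degree_single] at hdeg
      exact Nat.le_of_add_le_add_right hdeg

theorem mem_span_monomial_of_support_subset {E : Set (σ →₀ ℕ)} (hE : E.Finite)
    {f : MvPowerSeries σ R} (hf : f.support ⊆ upperClosure E) :
    f ∈ Ideal.span ((monomial · (1 : R)) '' E) := by
  refine mem_of_support_subset_biUnion hE (u := Set.Ici) (fun e he g hg => ?_)
    (fun d hd => by simpa using (mem_upperClosure.mp (hf hd)))
  obtain ⟨g, rfl, -⟩ := exists_eq_monomial_mul_of_support_subset hg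
  exact Ideal.mul_mem_right _ _ (Ideal.subset_span (Set.mem_image_of_mem _ he))

theorem mem_pow_mul_span_monomial_of_support_subset [Finite σ] {E : Set (σ →₀ ℕ)}
    (hE : E.Finite) {n j : ℕ} (hdeg : ∀ e ∈ E, degree e ≤ n) {f : MvPowerSeries σ R}
    (hf : f.support ⊆ upperClosure E ∩ {d | n + j ≤ degree d}) :
    f ∈ Ideal.span (Set.range X) ^ j * Ideal.span ((monomial · (1 : R)) '' E) := by
  have hcover : (upperClosure E : Set (σ →₀ ℕ)) ∩ {d | n + j ≤ degree d} ⊆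
      ⋃ e ∈ E, Set.Ici e ∩ {d | n + j ≤ degree d} := by
    rintro d ⟨hd, hdeg⟩
    obtain ⟨e, he, hed⟩ := mem_upperClosure.mp hd
    exact Set.mem_biUnion he ⟨hed, hdeg⟩
  refine mem_of_support_subset_biUnion hE (fun e he g hg => ?_) (hf.trans hcover)
  rw [mul_comm]
  refine Ideal.mul_mono_left (Ideal.span_mono (Set.singleton_subset_iff.mpr
    (Set.mem_image_of_mem _ he))) (mem_span_monomial_mul_of_support_subset
      (hg.trans Set.inter_subset_left) fun h hh => mem_pow_span_X_of_support_subset ?_)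
  intro d hd
  have hde : n + j ≤ degree (d + e) := (hg (hh hd)).2
  rw [map_add] at hde
  show j ≤ degree d
  have := hdeg e he
  omega

theorem support_subset_union_of_mem_sup {I J : Ideal (MvPowerSeries σ R)}
    {s t : Set (σ →₀ ℕ)} {hs : IsUpperSet s} {ht : IsUpperSet t}
    (hI : I ≤ restrictSupportIdeal s hs) (hJ : J ≤ restrictSupportIdeal t ht)
    {f : MvPowerSeries σ R} (hf : f ∈ I ⊔ J) : f.support ⊆ s ∪ t := by
  obtain ⟨a, ha, b, hb, rfl⟩ := Submodule.mem_sup.mp hf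
  exact (support_add_subset a b).trans (Set.union_subset_union (hI ha) (hJ hb))

theorem span_monomial_eq_restrictSupportIdeal {E : Set (σ →₀ ℕ)} (hE : E.Finite) :
    Ideal.span ((monomial · (1 : R)) '' E) =
      restrictSupportIdeal (upperClosure E) (upperClosure E).upper :=
  le_antisymm (span_monomial_le_restrictSupportIdeal E)
    fun _ hf => mem_span_monomial_of_support_subset hE hf

theorem pow_add_sup_inf_sup_le [Finite σ] {E : Set (σ →₀ ℕ)} (hE : E.Finite) {n : ℕ}
    (hdeg : ∀ e ∈ E, degree e ≤ n) (j : ℕ) {s : Set (σ →₀ ℕ)} (hs : IsUpperSet s) :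
    (Ideal.span (Set.range X) ^ (n + j) ⊔ restrictSupportIdeal s hs) ⊓
        (Ideal.span ((monomial · (1 : R)) '' E) ⊔ restrictSupportIdeal s hs) ≤
      Ideal.span (Set.range X) ^ j * Ideal.span ((monomial · (1 : R)) '' E) ⊔
        restrictSupportIdeal s hs := by
  rintro f ⟨hf₁, hf₂⟩
  have h₁ := support_subset_union_of_mem_sup (pow_span_X_le_restrictSupportIdeal (n + j))
    le_rfl hf₁
  have h₂ := support_subset_union_of_mem_sup (span_monomial_le_restrictSupportIdeal E) le_rfl hf₂
  refine mem_of_support_subset_union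
    (fun g hg => Ideal.mem_sup_left (mem_pow_mul_span_monomial_of_support_subset hE hdeg hg))
    (fun g hg => Ideal.mem_sup_right hg) fun d hd => ?_
  rcases h₂ hd with hdE | hds
  · rcases h₁ hd with hdD | hds
    · exact Or.inl ⟨hdE, hdD⟩
    · exact Or.inr hds
  · exact Or.inr hds

end

section

variable {σ R : Type*} [CommRing R]

theorem map_pow_add_inf_map_eq {A : Type*} [CommRing A] [Finite σ]
    {φ : MvPowerSeries σ R →+* A} (hφ : Function.Surjective φ) {s : Set (σ →₀ ℕ)}
    {hs : IsUpperSet s} (hker : RingHom.ker φ = restrictSupportIdeal s hs)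
    {E : Set (σ →₀ ℕ)} (hE : E.Finite) {n : ℕ} (hdeg : ∀ e ∈ E, degree e = n) (j : ℕ) :
    (Ideal.span (Set.range X)).map φ ^ (n + j) ⊓ (Ideal.span ((monomial · 1) '' E)).map φ =
      (Ideal.span (Set.range X)).map φ ^ j * (Ideal.span ((monomial · 1) '' E)).map φ := by
  have hQ : Ideal.span ((monomial · (1 : R)) '' E) ≤ Ideal.span (Set.range X) ^ n := by
    rw [Ideal.span_le]
    rintro _ ⟨e, he, rfl⟩
    refine mem_pow_span_X_of_support_subset ((support_monomial_subset e 1).trans ?_)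
    simp [hdeg e he]
  simp only [← Ideal.map_pow, ← Ideal.map_mul]
  refine le_antisymm (Ideal.map_inf_map_le_map_of_surjective hφ ?_) (le_inf ?_ ?_)
  · rw [hker]
    exact pow_add_sup_inf_sup_le hE (fun e he => (hdeg e he).le) j hs
  · rw [add_comm, pow_add]
    exact Ideal.map_mono (Ideal.mul_mono_right hQ)
  · exact Ideal.map_mono Ideal.mul_le_right

end

end MvPowerSeries

open MvPowerSeries Finsupp in
theorem relIdeal_eq_span_monomial (k : Type*) [Field k] :
    relIdeal k = Ideal.span ((monomial · (1 : k)) '' {single 0 1 + single 1 1, single 1 3}) := by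
  rw [relIdeal, Xv, Xv, X_def, X_def, monomial_mul_monomial, one_mul, ← X_def, X_pow_eq,
    Set.image_insert_eq, Set.image_singleton]

theorem stmt16 (k : Type*) [Field k] :
    ∀ n : ℕ, 1 ≤ n →
    (letI π := Ideal.Quotient.mk (relIdeal k)
     letI x := π (Xv k 0)
     letI y := π (Xv k 1)
     letI u := π (Xv k 2)
     letI v := π (Xv k 3)
     letI m : Ideal (Ak k) := Ideal.span {x, y, u, v}
     m ^ (2 * n) ⊓ Ideal.span {x ^ n, u ^ n, v ^ n} =
       m ^ n * Ideal.span {x ^ n, u ^ n, v ^ n}) := by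
  intro n _
  set π := Ideal.Quotient.mk (relIdeal k)
  have hker : RingHom.ker π = MvPowerSeries.restrictSupportIdeal
      (upperClosure ({Finsupp.single 0 1 + Finsupp.single 1 1, Finsupp.single 1 3} :
        Set (Fin 4 →₀ ℕ))) (upperClosure _).upper := by
    rw [Ideal.mk_ker, relIdeal_eq_span_monomial,
      MvPowerSeries.span_monomial_eq_restrictSupportIdeal (by simp)]
  have hm : (Ideal.span (Set.range MvPowerSeries.X)).map π =
      Ideal.span {π (Xv k 0), π (Xv k 1), π (Xv k 2), π (Xv k 3)} := by
    rw [Ideal.map_span, ← Set.range_comp]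
    congr 1
    ext
    simp [Fin.exists_fin_succ, Xv, eq_comm]
  have hQ : (Ideal.span ((MvPowerSeries.monomial · 1) ''
      {Finsupp.single 0 n, Finsupp.single 2 n, Finsupp.single 3 n})).map π =
      Ideal.span {π (Xv k 0) ^ n, π (Xv k 2) ^ n, π (Xv k 3) ^ n} := by
    simp [Ideal.map_span, Set.image_insert_eq, ← MvPowerSeries.X_pow_eq, Xv]
  have key := MvPowerSeries.map_pow_add_inf_map_eq Ideal.Quotient.mk_surjective hker
    (E := {Finsupp.single 0 n, Finsupp.single 2 n, Finsupp.single 3 n}) (n := n)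
    (by simp) (by simp) n
  rw [hm, hQ, ← two_mul] at key
  exact key

end
end
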